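/- For every n ≥ 6 with n ≡ 2 (mod 4), the alternating configuration of n pegs can be sorted in ⌈n/2⌉ Berge 3-moves, via the inductive construction with base {7, 2, 6, 1} for n = 6 and, for n = 4i+2 ≥ 10, sorting the middle n−4 pegs recursively while ignoring positions 1, 2, 2i+3, 2i+4 and then appending the two moves {3, 2i+4, 1}. Hence h(n,3) = ⌈n/2⌉ for n ≡ 2 (mod 4), n ≥ 6. -/

import Mathlib

/-- A board configuration has finite support: only finitely many positions hold pegs. -/
def FinSupp (c : ℤ → Option Bool) : Prop := {p : ℤ | (c p).isSome}.Finite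

/-- The disorder: number of pegs `p` such that it is NOT the case that the next peg
to the right of `p` exists and has the same color. -/
noncomputable def disorder (c : ℤ → Option Bool) : ℕ :=
  Set.ncard {p : ℤ | (c p).isSome ∧
    ¬ ∃ q : ℤ, p < q ∧ c q = c p ∧ ∀ r : ℤ, p < r → r < q → c r = none}

/-- A Berge `k`-move taking the `k` pegs at positions `i, i+1, ..., i+k-1` to the
`k` vacant positions `j, j+1, ..., j+k-1`, preserving order. -/
def MoveTo (k : ℕ) (i j : ℤ) (c c' : ℤ → Option Bool) : Prop :=
  (j + k ≤ i ∨ i + k ≤ j) ∧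
  (∀ t : ℤ, 0 ≤ t → t < k → (c (i + t)).isSome ∧ c (j + t) = none) ∧
  c' = fun p => if j ≤ p ∧ p < j + k then c (i + (p - j))
    else if i ≤ p ∧ p < i + k then none else c p

/-- A Berge `k`-move from some source to some destination. -/
def BergeMove (k : ℕ) (c c' : ℤ → Option Bool) : Prop :=
  ∃ i j : ℤ, MoveTo k i j c c'

/-- The alternating configuration of `n` pegs: pegs at positions `1,...,n`,
white (`true`) at odd positions and black (`false`) at even positions. -/
def altConfig (n : ℕ) : ℤ → Option Bool :=
  fun p => if 1 ≤ p ∧ p ≤ (n : ℤ) then some (decide (p % 2 = 1)) else none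

/-- A sorted configuration of `n` pegs: a contiguous block of `n` pegs, the first
`⌈n/2⌉` of one color, followed by the remaining `⌊n/2⌋` of the other color. -/
def IsSorted (n : ℕ) (c : ℤ → Option Bool) : Prop :=
  ∃ j : ℤ, ∃ w : Bool,
    (∀ p : ℤ, (c p).isSome ↔ (j ≤ p ∧ p < j + (n : ℤ))) ∧
    (∀ p : ℤ, j ≤ p → p < j + (((n + 1) / 2 : ℕ) : ℤ) → c p = some w) ∧
    (∀ p : ℤ, j + (((n + 1) / 2 : ℕ) : ℤ) ≤ p → p < j + (n : ℤ) → c p = some (!w))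

/-- The alternating configuration of `n` pegs can be sorted in `m` Berge `k`-moves. -/
def SortsIn (k n m : ℕ) : Prop :=
  ∃ f : ℕ → (ℤ → Option Bool), f 0 = altConfig n ∧
    (∀ i < m, BergeMove k (f i) (f (i + 1))) ∧ IsSorted n (f m)

def GP (c : ℤ → Option Bool) : Set ℤ := {p | (c p).isSome ∧ c (p+1) = c p}

lemma GP_finite {c : ℤ → Option Bool} (h : FinSupp c) : (GP c).Finite :=
  h.subset (fun _ h => h.1)

lemma finsupp_alt (n : ℕ) : FinSupp (altConfig n) := by
  apply (Set.finite_Icc (1:ℤ) n).subset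
  intro p hp
  simp only [Set.mem_setOf_eq, altConfig] at hp
  by_cases h : 1 ≤ p ∧ p ≤ (n:ℤ)
  · exact Set.mem_Icc.mpr (by omega)
  · rw [if_neg h] at hp; simp at hp

lemma finsupp_move {i j : ℤ} {c c' : ℤ → Option Bool} (h : MoveTo 3 i j c c')
    (hc : FinSupp c) : FinSupp c' := by
  obtain ⟨-, -, rfl⟩ := h
  apply (hc.union (Set.finite_Icc j (j+2))).subset
  intro p hp
  simp only [Set.mem_setOf_eq] at hp
  by_cases h1 : j ≤ p ∧ p < j + 3
  · exact Or.inr (Set.mem_Icc.mpr (by omega))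
  · rw [if_neg (by push_cast; omega)] at hp
    by_cases h2 : i ≤ p ∧ p < i + 3
    · rw [if_pos (by push_cast; omega)] at hp; simp at hp
    · rw [if_neg (by push_cast; omega)] at hp; exact Or.inl hp

lemma GP_alt (n : ℕ) : GP (altConfig n) = ∅ := by
  ext p
  simp only [GP, Set.mem_setOf_eq, Set.mem_empty_iff_false, iff_false, not_and]
  intro hp hco
  simp only [altConfig] at hp hco
  by_cases h : 1 ≤ p ∧ p ≤ (n:ℤ)
  · rw [if_pos h] at hco
    by_cases h2 : 1 ≤ p + 1 ∧ p + 1 ≤ (n:ℤ)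
    · rw [if_pos h2, Option.some_inj, decide_eq_decide] at hco
      omega
    · rw [if_neg h2] at hco; cases hco
  · rw [if_neg h] at hp; simp at hp

lemma move_facts {i j : ℤ} {c c' : ℤ → Option Bool} (hm : MoveTo 3 i j c c') :
    (j + 3 ≤ i ∨ i + 3 ≤ j) ∧
    (∀ p : ℤ, j ≤ p → p < j + 3 → c' p = c (i + (p - j))) ∧
    (∀ p : ℤ, i ≤ p → p < i + 3 → c' p = none) ∧
    (∀ p : ℤ, ¬(j ≤ p ∧ p < j + 3) → ¬(i ≤ p ∧ p < i + 3) → c' p = c p) ∧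
    (∀ t : ℤ, 0 ≤ t → t < 3 → (c (i + t)).isSome ∧ c (j + t) = none) := by
  obtain ⟨hsep, hocc, hdef⟩ := hm
  have hsep' : j + 3 ≤ i ∨ i + 3 ≤ j := by push_cast at hsep; exact hsep
  refine ⟨hsep', ?_, ?_, ?_, ?_⟩
  · intro p h1 h2
    rw [hdef]
    simp only
    rw [if_pos (by push_cast; omega)]
  · intro p h1 h2
    rw [hdef]
    simp only
    rw [if_neg (by push_cast; omega), if_pos (by push_cast; omega)]
  · intro p h1 h2
    rw [hdef]
    simp only
    rw [if_neg (by push_cast; omega), if_neg (by push_cast; omega)]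
  · intro t h1 h2
    exact hocc t h1 (by push_cast; omega)

lemma gp_move_mem {i j : ℤ} {c c' : ℤ → Option Bool} (hm : MoveTo 3 i j c c') :
    ∀ p ∈ GP c',
      (if p = j then i else if p = j+1 then i+1 else p) ∈ GP c ∪ {j-1, j+2} := by
  obtain ⟨hsep, hcv, hcn, hco, hocc⟩ := move_facts hm
  have ej : c' j = c i := by
    have := hcv j le_rfl (by omega)
    rw [show i + (j - j) = i by ring] at this; exact this
  have ej1 : c' (j+1) = c (i+1) := by
    have := hcv (j+1) (by omega) (by omega)
    rw [show i + (j + 1 - j) = i + 1 by ring] at this; exact this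
  have ej2 : c' (j+2) = c (i+2) := by
    have := hcv (j+2) (by omega) (by omega)
    rw [show i + (j + 2 - j) = i + 2 by ring] at this; exact this
  rintro p ⟨hps, hpe⟩
  by_cases h1 : p = j
  · left
    rw [h1] at hps hpe
    rw [ej] at hps
    rw [ej1, ej] at hpe
    rw [if_pos h1]
    exact ⟨hps, hpe⟩
  · by_cases h2 : p = j + 1
    · left
      rw [h2] at hps hpe
      rw [ej1] at hps
      rw [show j + 1 + 1 = j + 2 by ring, ej2, ej1] at hpe
      rw [if_neg h1, if_pos h2]
      exact ⟨hps, by rw [show i + 1 + 1 = i + 2 by ring]; exact hpe⟩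
    · rw [if_neg h1, if_neg h2]
      by_cases h3 : p = j - 1
      · right; left; omega
      · by_cases h4 : p = j + 2
        · right; right; exact h4
        · left
          have hnp : ¬(i ≤ p ∧ p < i + 3) := by
            intro hcon
            rw [hcn p hcon.1 hcon.2] at hps
            simp at hps
          have hnp1 : ¬(i ≤ p + 1 ∧ p + 1 < i + 3) := by
            intro hcon
            rw [hcn (p+1) hcon.1 hcon.2] at hpe
            rw [← hpe] at hps
            simp at hps
          have e1 : c' p = c p := hco p (by omega) hnp
          have e2 : c' (p+1) = c (p+1) := hco (p+1) (by omega) (by omega)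
          rw [e1] at hps
          rw [e2, e1] at hpe
          exact ⟨hps, hpe⟩

lemma gp_move_le {i j : ℤ} {c c' : ℤ → Option Bool} (hm : MoveTo 3 i j c c')
    (hc : FinSupp c) : (GP c').ncard ≤ (GP c).ncard + 2 := by
  obtain ⟨hsep, hcv, hcn, hco, hocc⟩ := move_facts hm
  have hiNone : c' i = none := hcn i (le_refl i) (by omega)
  have hi1None : c' (i+1) = none := hcn (i+1) (by omega) (by omega)
  set φ : ℤ → ℤ := fun p => if p = j then i else if p = j+1 then i+1 else p with hφ
  have φval1 : ∀ p : ℤ, p = j → φ p = i := by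
    intro p hp; simp only [hφ]; rw [if_pos hp]
  have φval2 : ∀ p : ℤ, p ≠ j → p = j + 1 → φ p = i + 1 := by
    intro p h1 h2; simp only [hφ]; rw [if_neg h1, if_pos h2]
  have φval3 : ∀ p : ℤ, p ≠ j → p ≠ j + 1 → φ p = p := by
    intro p h1 h2; simp only [hφ]; rw [if_neg h1, if_neg h2]
  have hnotI : ∀ r : ℤ, r ∈ GP c' → r ≠ i ∧ r ≠ i + 1 := by
    rintro r ⟨hrs, -⟩
    constructor
    · rintro rfl; rw [hiNone] at hrs; simp at hrs
    · rintro rfl; rw [hi1None] at hrs; simp at hrs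
  have hmem : ∀ p ∈ GP c', φ p ∈ GP c ∪ {j-1, j+2} := gp_move_mem hm
  have hinj : Set.InjOn φ (GP c') := by
    intro p hp q hq he
    by_cases h1 : p = j
    · rw [φval1 p h1] at he
      by_cases h2 : q = j
      · omega
      · by_cases h3 : q = j + 1
        · rw [φval2 q h2 h3] at he; omega
        · rw [φval3 q h2 h3] at he
          exact absurd he.symm (hnotI q hq).1
    · by_cases h2 : p = j + 1
      · rw [φval2 p h1 h2] at he
        by_cases h3 : q = j
        · rw [φval1 q h3] at he; omega
        · by_cases h4 : q = j + 1
          · omega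
          · rw [φval3 q h3 h4] at he
            exact absurd he.symm (hnotI q hq).2
      · rw [φval3 p h1 h2] at he
        by_cases h3 : q = j
        · rw [φval1 q h3] at he
          exact absurd he (hnotI p hp).1
        · by_cases h4 : q = j + 1
          · rw [φval2 q h3 h4] at he
            exact absurd he (hnotI p hp).2
          · rw [φval3 q h3 h4] at he; exact he
  calc (GP c').ncard ≤ (GP c ∪ {j-1, j+2}).ncard := by
        exact Set.ncard_le_ncard_of_injOn φ hmem hinj
          ((GP_finite hc).union (Set.Finite.insert _ (Set.finite_singleton _)))
    _ ≤ (GP c).ncard + ({j-1, j+2} : Set ℤ).ncard := Set.ncard_union_le _ _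
    _ ≤ (GP c).ncard + 2 := by
        gcongr
        apply le_trans (Set.ncard_insert_le _ _)
        simp

lemma alt_isSome_iff (n : ℕ) (p : ℤ) :
    (altConfig n p).isSome ↔ (1 ≤ p ∧ p ≤ (n:ℤ)) := by
  unfold altConfig
  split_ifs with h <;> simp [h]

lemma alt_none_iff (n : ℕ) (p : ℤ) :
    altConfig n p = none ↔ ¬(1 ≤ p ∧ p ≤ (n:ℤ)) := by
  unfold altConfig
  split_ifs with h <;> simp [h]

lemma gp_first {n : ℕ} (hn : 3 ≤ n) {i j : ℤ} {c' : ℤ → Option Bool}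
    (hm : MoveTo 3 i j (altConfig n) c') : (GP c').ncard ≤ 1 := by
  obtain ⟨hsep, hcv, hcn, hco, hocc⟩ := move_facts hm
  have hn' : (3:ℤ) ≤ (n:ℤ) := by exact_mod_cast hn
  have hi0 : 1 ≤ i ∧ i ≤ (n:ℤ) := (alt_isSome_iff n i).mp (by
    have := (hocc 0 le_rfl (by omega)).1; rwa [add_zero] at this)
  have hi2 : 1 ≤ i + 2 ∧ i + 2 ≤ (n:ℤ) := (alt_isSome_iff n (i+2)).mp (by
    have := (hocc 2 (by omega) (by omega)).1; exact this)
  have hj0 : ¬(1 ≤ j ∧ j ≤ (n:ℤ)) := (alt_none_iff n j).mp (by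
    have := (hocc 0 le_rfl (by omega)).2; rwa [add_zero] at this)
  have hj1 : ¬(1 ≤ j + 1 ∧ j + 1 ≤ (n:ℤ)) := (alt_none_iff n (j+1)).mp
    (hocc 1 (by omega) (by omega)).2
  have hj2 : ¬(1 ≤ j + 2 ∧ j + 2 ≤ (n:ℤ)) := (alt_none_iff n (j+2)).mp
    (hocc 2 (by omega) (by omega)).2
  have hsub : GP c' ⊆ {j - 1, j + 2} := by
    intro p hp
    have := gp_move_mem hm p hp
    rw [GP_alt n] at this
    simp only [Set.empty_union] at this
    by_cases h1 : p = j
    · rw [if_pos h1] at this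
      simp only [Set.mem_insert_iff, Set.mem_singleton_iff] at this
      exfalso; omega
    · by_cases h2 : p = j + 1
      · rw [if_neg h1, if_pos h2] at this
        simp only [Set.mem_insert_iff, Set.mem_singleton_iff] at this
        exfalso; omega
      · rw [if_neg h1, if_neg h2] at this
        exact this
  rcases (show j + 2 ≤ 0 ∨ (n:ℤ) + 1 ≤ j by omega) with hc | hc
  · have hsub2 : GP c' ⊆ {j + 2} := by
      intro p hp
      rcases hsub hp with h | h
      · exfalso
        subst h
        obtain ⟨hps, -⟩ := hp
        have : c' (j-1) = altConfig n (j-1) := hco (j-1) (by omega) (by omega)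
        rw [this, (alt_none_iff n (j-1)).mpr (by omega)] at hps
        simp at hps
      · exact h
    calc (GP c').ncard ≤ ({j+2} : Set ℤ).ncard :=
          Set.ncard_le_ncard hsub2 (Set.finite_singleton _)
      _ = 1 := Set.ncard_singleton _
  · have hsub2 : GP c' ⊆ {j - 1} := by
      intro p hp
      rcases hsub hp with h | h
      · exact h
      · exfalso
        rw [Set.mem_singleton_iff] at h
        subst h
        obtain ⟨hps, hpe⟩ := hp
        have : c' (j+2+1) = altConfig n (j+2+1) := hco (j+2+1) (by omega) (by omega)
        rw [this, (alt_none_iff n (j+2+1)).mpr (by omega)] at hpe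
        rw [← hpe] at hps
        simp at hps
    calc (GP c').ncard ≤ ({j-1} : Set ℤ).ncard :=
          Set.ncard_le_ncard hsub2 (Set.finite_singleton _)
      _ = 1 := Set.ncard_singleton _

lemma gp_sorted {n : ℕ} (hn : 3 ≤ n) {c : ℤ → Option Bool} (hs : IsSorted n c)
    (hfin : FinSupp c) : n - 2 ≤ (GP c).ncard := by
  obtain ⟨j, w, hsupp, hw, hb⟩ := hs
  set h : ℕ := (n + 1) / 2 with hh
  have hh1 : 1 ≤ h ∧ h + 1 ≤ n := by constructor <;> omega
  set S : Finset ℤ := (Finset.Icc j (j + (n:ℤ) - 2)).erase (j + (h:ℤ) - 1) with hS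
  have hcast : (1:ℤ) ≤ (h:ℤ) ∧ (h:ℤ) + 1 ≤ (n:ℤ) := by exact_mod_cast hh1
  have hsub : (↑S : Set ℤ) ⊆ GP c := by
    intro p hp
    simp only [hS, Finset.coe_erase, Set.mem_diff, Finset.coe_Icc, Set.mem_Icc,
      Set.mem_singleton_iff] at hp
    obtain ⟨⟨hp1, hp2⟩, hp3⟩ := hp
    by_cases hcase : p ≤ j + (h:ℤ) - 2
    · have e1 : c p = some w := hw p hp1 (by omega)
      have e2 : c (p+1) = some w := hw (p+1) (by omega) (by omega)
      exact ⟨by rw [e1]; rfl, by rw [e1, e2]⟩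
    · have hge : j + (h:ℤ) ≤ p := by omega
      have e1 : c p = some (!w) := hb p hge (by omega)
      have e2 : c (p+1) = some (!w) := hb (p+1) (by omega) (by omega)
      exact ⟨by rw [e1]; rfl, by rw [e1, e2]⟩
  have hcard : S.card = n - 2 := by
    rw [hS, Finset.card_erase_of_mem]
    · rw [Int.card_Icc]
      have : (j + (n:ℤ) - 2 + 1 - j) = (n:ℤ) - 1 := by ring
      rw [this]
      omega
    · rw [Finset.mem_Icc]
      constructor <;> omega
  calc (n:ℕ) - 2 = S.card := hcard.symm
    _ = (↑S : Set ℤ).ncard := (Set.ncard_coe_finset S).symm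
    _ ≤ (GP c).ncard := Set.ncard_le_ncard hsub (GP_finite hfin)

lemma lower_bound {n m : ℕ} (hn : 6 ≤ n) (hmod : n % 4 = 2) (hs : SortsIn 3 n m) :
    (n + 1) / 2 ≤ m := by
  obtain ⟨f, hf0, hmoves, hsorted⟩ := hs
  have key : ∀ i, i ≤ m → FinSupp (f i) ∧ (1 ≤ i → (GP (f i)).ncard ≤ 2*i - 1) := by
    intro i
    induction i with
    | zero => intro _; exact ⟨hf0 ▸ finsupp_alt n, by omega⟩
    | succ k ih =>
      intro hk
      obtain ⟨hfk, hgk⟩ := ih (by omega)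
      obtain ⟨a, b, hmv⟩ := hmoves k (by omega)
      refine ⟨finsupp_move hmv hfk, fun _ => ?_⟩
      by_cases hk0 : k = 0
      · subst hk0
        rw [hf0] at hmv
        have := gp_first (by omega) hmv
        omega
      · have h1 := gp_move_le hmv hfk
        have h2 := hgk (by omega)
        omega
  rcases Nat.eq_zero_or_pos m with rfl | hm
  · exfalso
    rw [hf0] at hsorted
    have h1 := gp_sorted (by omega) hsorted (finsupp_alt n)
    rw [GP_alt n, Set.ncard_empty] at h1
    omega
  · have h1 := gp_sorted (n := n) (by omega) hsorted (key m le_rfl).1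
    have h2 := (key m le_rfl).2 (by omega)
    omega

def Chain : List (ℤ × ℤ) → (ℤ → Option Bool) → (ℤ → Option Bool) → Prop
  | [], c, c' => c' = c
  | (ab :: L), c, c' => ∃ d, MoveTo 3 ab.1 ab.2 c d ∧ Chain L d c'

/-- final sorted config for n = 4t+6 -/
def FCfg (t : ℕ) : ℤ → Option Bool := fun p =>
  if 4 ≤ p ∧ p ≤ 2*(t:ℤ)+6 then some true
  else if 2*(t:ℤ)+7 ≤ p ∧ p ≤ 4*(t:ℤ)+9 then some false else none

/-- intermediate configs for the base case n = 6 -/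
def C1 : ℤ → Option Bool := fun p =>
  if p = 1 then some true
  else if p = 5 then some true
  else if p = 6 then some false
  else if p = 7 then some false
  else if p = 8 then some true
  else if p = 9 then some false
  else none

def C2 : ℤ → Option Bool := fun p =>
  if p = 1 then some true
  else if p = 2 then some false
  else if p = 3 then some false
  else if p = 4 then some true
  else if p = 5 then some true
  else if p = 9 then some false
  else none

lemma base_move1 : MoveTo 3 2 7 (altConfig 6) C1 := by
  refine ⟨by norm_num, ?_, ?_⟩
  · intro t h1 h2
    have : t = 0 ∨ t = 1 ∨ t = 2 := by push_cast at h2; omega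
    rcases this with rfl | rfl | rfl <;> constructor <;> decide
  · funext p
    by_cases hin : 1 ≤ p ∧ p ≤ 9
    · obtain ⟨hl, hr⟩ := hin
      interval_cases p <;> decide
    · push_cast
      rw [if_neg (show ¬((7:ℤ) ≤ p ∧ p < 10) by omega),
          if_neg (show ¬((2:ℤ) ≤ p ∧ p < 5) by omega)]
      simp only [altConfig, C1, C2, FCfg]
      push_cast
      split_ifs <;> first | rfl | omega

lemma base_move2 : MoveTo 3 6 2 C1 C2 := by
  refine ⟨by norm_num, ?_, ?_⟩
  · intro t h1 h2
    have : t = 0 ∨ t = 1 ∨ t = 2 := by push_cast at h2; omega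
    rcases this with rfl | rfl | rfl <;> constructor <;> decide
  · funext p
    by_cases hin : 1 ≤ p ∧ p ≤ 9
    · obtain ⟨hl, hr⟩ := hin
      interval_cases p <;> decide
    · push_cast
      rw [if_neg (show ¬((2:ℤ) ≤ p ∧ p < 5) by omega),
          if_neg (show ¬((6:ℤ) ≤ p ∧ p < 9) by omega)]
      simp only [altConfig, C1, C2, FCfg]
      push_cast
      split_ifs <;> first | rfl | omega

lemma base_move3 : MoveTo 3 1 6 C2 (FCfg 0) := by
  refine ⟨by norm_num, ?_, ?_⟩
  · intro t h1 h2
    have : t = 0 ∨ t = 1 ∨ t = 2 := by push_cast at h2; omega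
    rcases this with rfl | rfl | rfl <;> constructor <;> decide
  · funext p
    by_cases hin : 1 ≤ p ∧ p ≤ 9
    · obtain ⟨hl, hr⟩ := hin
      interval_cases p <;> decide
    · push_cast
      rw [if_neg (show ¬((6:ℤ) ≤ p ∧ p < 9) by omega),
          if_neg (show ¬((1:ℤ) ≤ p ∧ p < 4) by omega)]
      simp only [altConfig, C1, C2, FCfg]
      push_cast
      split_ifs <;> first | rfl | omega

lemma base_chain : Chain [(2,7),(6,2),(1,6)] (altConfig 6) (FCfg 0) :=
  ⟨C1, base_move1, C2, base_move2, FCfg 0, base_move3, rfl⟩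

def tau (B x : ℤ) : ℤ := if x ≤ B then x + 2 else x + 4

def Emap (B : ℤ) (c : ℤ → Option Bool) : ℤ → Option Bool :=
  fun q => if q ≤ B + 2 then c (q - 2) else if B + 5 ≤ q then c (q - 4) else none

lemma squeeze_move {B a b : ℤ} {c c' : ℤ → Option Bool} (hm : MoveTo 3 a b c c')
    (ha : a + 2 ≤ B ∨ B + 1 ≤ a) (hb : b + 2 ≤ B ∨ B + 1 ≤ b) :
    MoveTo 3 (tau B a) (tau B b) (Emap B c) (Emap B c') := by
  obtain ⟨hsep, hocc, hdef⟩ := hm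
  have hsep' : b + 3 ≤ a ∨ a + 3 ≤ b := by push_cast at hsep; exact hsep
  have hocc' : ∀ t : ℤ, 0 ≤ t → t < 3 → (c (a + t)).isSome ∧ c (b + t) = none :=
    fun t h1 h2 => hocc t h1 (by push_cast; omega)
  have htau : ∀ x : ℤ, (x + 2 ≤ B ∨ B + 1 ≤ x) →
      ∀ s : ℤ, 0 ≤ s → s < 3 → ∀ cc : ℤ → Option Bool, Emap B cc (tau B x + s) = cc (x + s) := by
    intro x hx s h1 h2 cc
    unfold tau Emap
    rcases hx with hx | hx
    · rw [if_pos (by omega), if_pos (by omega), show x + 2 + s - 2 = x + s by ring]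
    · by_cases hxB : x ≤ B
      · rw [if_pos hxB, if_pos (by omega), show x + 2 + s - 2 = x + s by ring]
      · rw [if_neg hxB, if_neg (by omega), if_pos (by omega),
          show x + 4 + s - 4 = x + s by ring]
  refine ⟨?_, ?_, ?_⟩
  · unfold tau
    push_cast
    rcases ha with ha | ha <;> rcases hb with hb | hb <;>
      [skip; skip; skip; skip] <;> split_ifs <;> omega
  · intro t h1 h2
    have h2' : t < 3 := by push_cast at h2; omega
    rw [htau a ha t h1 h2', htau b hb t h1 h2']
    exact hocc' t h1 h2'
  · funext q
    rw [hdef]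
    unfold tau Emap
    push_cast
    split_ifs <;> first | rfl | omega | (congr 1; omega)

def merge (c d : ℤ → Option Bool) : ℤ → Option Bool := fun p => (c p).or (d p)

lemma frame_move {a b : ℤ} {c c' d : ℤ → Option Bool} (hm : MoveTo 3 a b c c')
    (hd : ∀ s : ℤ, ((a ≤ s ∧ s ≤ a + 2) ∨ (b ≤ s ∧ s ≤ b + 2)) → d s = none) :
    MoveTo 3 a b (merge c d) (merge c' d) := by
  obtain ⟨hsep, hocc, hdef⟩ := hm
  refine ⟨hsep, ?_, ?_⟩
  · intro t h1 h2
    have h2' : t < 3 := by push_cast at h2; omega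
    obtain ⟨hs, hn⟩ := hocc t h1 h2
    constructor
    · unfold merge
      cases hcs : c (a + t) with
      | none => rw [hcs] at hs; simp at hs
      | some x => simp [hcs]
    · unfold merge
      rw [hn, hd (b + t) (Or.inr ⟨by omega, by omega⟩)]
      rfl
  · funext q
    rw [hdef]
    unfold merge
    simp only
    push_cast
    split_ifs with h1 h2
    · rw [hd q (Or.inr ⟨h1.1, by omega⟩), hd (a + (q - b)) (Or.inl ⟨by omega, by omega⟩)]
    · rw [hd q (Or.inl ⟨h2.1, by omega⟩)]
      rfl
    · rfl

lemma chain_append {L M : List (ℤ × ℤ)} {c d e : ℤ → Option Bool}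
    (h1 : Chain L c d) (h2 : Chain M d e) : Chain (L ++ M) c e := by
  induction L generalizing c with
  | nil => rw [show d = c from h1] at h2; exact h2
  | cons ab L ih =>
    obtain ⟨x, hm, hch⟩ := h1
    exact ⟨x, hm, ih hch⟩

def GoodM (B : ℤ) (ab : ℤ × ℤ) : Prop :=
  (1 ≤ ab.1 ∧ (ab.1 + 2 ≤ B ∨ B + 1 ≤ ab.1)) ∧
  (1 ≤ ab.2 ∧ (ab.2 + 2 ≤ B ∨ B + 1 ≤ ab.2))

lemma chain_lift {B : ℤ} {L : List (ℤ × ℤ)} {c c' : ℤ → Option Bool}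
    (hch : Chain L c c') (hg : ∀ ab ∈ L, GoodM B ab) (d : ℤ → Option Bool)
    (hd : ∀ s : ℤ, ((3 ≤ s ∧ s ≤ B + 2) ∨ B + 5 ≤ s) → d s = none) :
    Chain (L.map (fun ab => (tau B ab.1, tau B ab.2)))
      (merge (Emap B c) d) (merge (Emap B c') d) := by
  induction L generalizing c with
  | nil => rw [show c' = c from hch]; rfl
  | cons ab L ih =>
    obtain ⟨e, hm, hch'⟩ := hch
    obtain ⟨⟨ha1, ha2⟩, hb1, hb2⟩ := hg ab List.mem_cons_self
    refine ⟨merge (Emap B e) d, ?_, ih hch' (fun x hx => hg x (List.mem_cons_of_mem _ hx))⟩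
    apply frame_move (squeeze_move hm ha2 hb2)
    intro s hs
    apply hd
    unfold tau at hs
    rcases hs with ⟨h1, h2⟩ | ⟨h1, h2⟩
    · split_ifs at h1 h2 <;> omega
    · split_ifs at h1 h2 <;> omega

def frameC (t : ℕ) : ℤ → Option Bool := fun p =>
  if p = 1 ∨ p = 2 ∨ p = 2*(t:ℤ)+7 ∨ p = 2*(t:ℤ)+8 then some (decide (p % 2 = 1))
  else none

def QCfg (t : ℕ) : ℤ → Option Bool := fun p =>
  if p = 1 then some true
  else if p = 2 then some false
  else if 6 ≤ p ∧ p ≤ 2*(t:ℤ)+7 then some true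
  else if p = 2*(t:ℤ)+8 then some false
  else if 2*(t:ℤ)+9 ≤ p ∧ p ≤ 2*(t:ℤ)+10 then some true
  else if 2*(t:ℤ)+11 ≤ p ∧ p ≤ 4*(t:ℤ)+13 then some false
  else none

def RCfg (t : ℕ) : ℤ → Option Bool := fun p =>
  if p = 1 then some true
  else if 2 ≤ p ∧ p ≤ 3 then some false
  else if 4 ≤ p ∧ p ≤ 5 then some true
  else if 6 ≤ p ∧ p ≤ 2*(t:ℤ)+7 then some true
  else if 2*(t:ℤ)+11 ≤ p ∧ p ≤ 4*(t:ℤ)+13 then some false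
  else none

lemma frame_none (t : ℕ) : ∀ s : ℤ,
    ((3 ≤ s ∧ s ≤ (2*(t:ℤ)+4) + 2) ∨ (2*(t:ℤ)+4) + 5 ≤ s) → frameC t s = none := by
  intro s hs
  unfold frameC
  rw [if_neg (by omega)]

set_option maxHeartbeats 2000000 in
lemma eq_alt (t : ℕ) :
    merge (Emap (2*(t:ℤ)+4) (altConfig (4*t+6))) (frameC t) = altConfig (4*t+10) := by
  funext p
  unfold merge Emap altConfig frameC
  push_cast
  split_ifs <;>
    first
      | omega
      | rfl
      | (simp only [Option.none_or, Option.or_none, Option.some_inj]; rw [decide_eq_decide]; omega)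

set_option maxHeartbeats 2000000 in
lemma eq_F (t : ℕ) :
    merge (Emap (2*(t:ℤ)+4) (FCfg t)) (frameC t) = QCfg t := by
  funext p
  unfold merge Emap FCfg frameC QCfg
  split_ifs <;>
    first
      | omega
      | rfl
      | (simp only [Option.none_or, Option.or_none, Option.some_inj]
         first
           | (rw [decide_eq_true_eq]; omega)
           | (rw [decide_eq_false_iff_not]; omega))

set_option maxHeartbeats 2000000 in
lemma moveA (t : ℕ) : MoveTo 3 (2*(t:ℤ)+8) 3 (QCfg t) (RCfg t) := by
  refine ⟨by push_cast; omega, ?_, ?_⟩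
  · intro s h1 h2
    have h2' : s < 3 := by push_cast at h2; omega
    unfold QCfg
    constructor
    · rcases (show s = 0 ∨ s = 1 ∨ s = 2 by omega) with rfl | rfl | rfl <;>
        · split_ifs <;> first | omega | rfl
    · split_ifs <;> first | omega | rfl
  · funext q
    unfold QCfg RCfg
    split_ifs <;> first | omega | rfl

set_option maxHeartbeats 2000000 in
lemma moveB (t : ℕ) : MoveTo 3 1 (2*(t:ℤ)+8) (RCfg t) (FCfg (t+1)) := by
  refine ⟨by push_cast; omega, ?_, ?_⟩
  · intro s h1 h2
    have h2' : s < 3 := by push_cast at h2; omega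
    unfold RCfg
    constructor
    · rcases (show s = 0 ∨ s = 1 ∨ s = 2 by omega) with rfl | rfl | rfl <;>
        · split_ifs <;> first | omega | rfl
    · split_ifs <;> first | omega | rfl
  · funext q
    unfold RCfg FCfg
    split_ifs <;> first | omega | rfl

lemma main_chain (t : ℕ) : ∃ L : List (ℤ × ℤ), L.length = 2*t+3 ∧
    (∀ ab ∈ L, GoodM (2*(t:ℤ)+4) ab) ∧ Chain L (altConfig (4*t+6)) (FCfg t) := by
  induction t with
  | zero =>
    refine ⟨[(2,7),(6,2),(1,6)], rfl, ?_, base_chain⟩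
    intro ab hab
    simp only [List.mem_cons, List.not_mem_nil, or_false] at hab
    rcases hab with rfl | rfl | rfl <;> norm_num [GoodM]
  | succ t ih =>
    obtain ⟨L, hlen, hgood, hch⟩ := ih
    have hlift := chain_lift hch hgood (frameC t) (frame_none t)
    rw [eq_alt t, eq_F t] at hlift
    refine ⟨L.map (fun ab => (tau (2*(t:ℤ)+4) ab.1, tau (2*(t:ℤ)+4) ab.2)) ++
      [(2*(t:ℤ)+8, 3), (1, 2*(t:ℤ)+8)], ?_, ?_, ?_⟩
    · simp only [List.length_append, List.length_map, hlen]
      norm_num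
      omega
    · intro ab hab
      rcases List.mem_append.mp hab with h | h
      · obtain ⟨xy, hxy, rfl⟩ := List.mem_map.mp h
        obtain ⟨⟨ha1, ha2⟩, hb1, hb2⟩ := hgood xy hxy
        unfold GoodM tau
        push_cast
        constructor
        · constructor
          · split_ifs <;> omega
          · split_ifs <;> omega
        · constructor
          · split_ifs <;> omega
          · split_ifs <;> omega
      · simp only [List.mem_cons, List.not_mem_nil, or_false] at h
        rcases h with rfl | rfl <;> (refine ⟨⟨?_, ?_⟩, ?_, ?_⟩ <;> simp only [] <;> push_cast <;> omega)
    · rw [show 4*(t+1)+6 = 4*t+10 from by ring]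
      exact chain_append hlift ⟨RCfg t, moveA t, FCfg (t+1), moveB t, rfl⟩

lemma chain_to_f {L : List (ℤ × ℤ)} {c c' : ℤ → Option Bool} (h : Chain L c c') :
    ∃ f : ℕ → (ℤ → Option Bool), f 0 = c ∧
      (∀ i < L.length, BergeMove 3 (f i) (f (i + 1))) ∧ f L.length = c' := by
  induction L generalizing c with
  | nil =>
    exact ⟨fun _ => c, rfl, by intro i hi; simp at hi, by rw [h]⟩
  | cons ab L ih =>
    obtain ⟨d, hm, hch⟩ := h
    obtain ⟨f, hf0, hfm, hfl⟩ := ih hch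
    refine ⟨fun i => Nat.casesOn i c f, rfl, ?_, hfl⟩
    intro i hi
    cases i with
    | zero => exact ⟨ab.1, ab.2, show MoveTo 3 ab.1 ab.2 c (f 0) from hf0.symm ▸ hm⟩
    | succ k => exact hfm k (by simpa using hi)

lemma FCfg_sorted (t : ℕ) : IsSorted (4*t+6) (FCfg t) := by
  refine ⟨4, true, ?_, ?_, ?_⟩
  · intro p
    unfold FCfg
    push_cast
    split_ifs <;> simp <;> omega
  · intro p h1 h2
    rw [show ((4*t+6+1)/2 : ℕ) = 2*t+3 by omega] at h2
    push_cast at h2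
    unfold FCfg
    rw [if_pos (by omega)]
  · intro p h1 h2
    rw [show ((4*t+6+1)/2 : ℕ) = 2*t+3 by omega] at h1
    push_cast at h1 h2
    unfold FCfg
    rw [if_neg (by omega), if_pos (by omega)]
    rfl

lemma sorts (t : ℕ) : SortsIn 3 (4*t+6) (2*t+3) := by
  obtain ⟨L, hlen, -, hch⟩ := main_chain t
  obtain ⟨f, hf0, hfm, hfl⟩ := chain_to_f hch
  rw [hlen] at hfm hfl
  exact ⟨f, hf0, hfm, hfl ▸ FCfg_sorted t⟩

theorem h_three_moves_two_mod_four (n : ℕ) (hn : 6 ≤ n) (hmod : n % 4 = 2) :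
    IsLeast {m : ℕ | SortsIn 3 n m} ((n + 1) / 2) := by
  constructor
  · obtain ⟨t, rfl⟩ : ∃ t, n = 4*t+6 := ⟨(n-6)/4, by omega⟩
    show SortsIn 3 (4*t+6) ((4*t+6+1)/2)
    rw [show (4*t+6+1)/2 = 2*t+3 by omega]
    exact sorts t
  · intro m hm
    exact lower_bound hn hmod hm
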